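/- Let U ⊆ ℝ² be open and f : U × ℝ → ℝ a C^∞ function. Then the following conditions hold identically on U × ℝ: (i) ∂⁴f/∂p⁴ = 0; (ii) 2·f_{py} + (1/3)·f_p·f_{pp} − 𝔇(f_{pp}) = 0; (iii) f_y + (2/9)·(f_p)² − (1/3)·𝔇(f_p) = 0; (iv) (1/18)·((f_{pp})² − 2·f_p·f_{ppp}) + (1/6)·(f_{ppy} − 𝔇(f_{ppp})) = 0; if and only if there exist C^∞ functions A, B, C, D : U → ℝ such that f(x,y,p) = A(x,y)p³ + 3B(x,y)p² + 3C(x,y)p + D(x,y) on U × ℝ and the system of partial differential equations D_y − C_x = 2(BD − C²), C_y − B_x = AD − BC, B_y − A_x = 2(AC − B²) holds on U. -/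

import Mathlib

open scoped ContDiff

/-- Partial derivative with respect to the first variable of a function on `ℝ²`. -/
noncomputable def pdx (g : ℝ × ℝ → ℝ) (z : ℝ × ℝ) : ℝ := fderiv ℝ g z (1, 0)

/-- Partial derivative with respect to the second variable of a function on `ℝ²`. -/
noncomputable def pdy (g : ℝ × ℝ → ℝ) (z : ℝ × ℝ) : ℝ := fderiv ℝ g z (0, 1)

/-- Partial derivative in the `x`-direction of a function on `ℝ³`. -/
noncomputable def Dx3 (g : ℝ × ℝ × ℝ → ℝ) (z : ℝ × ℝ × ℝ) : ℝ := fderiv ℝ g z (1, 0, 0)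

/-- Partial derivative in the `y`-direction of a function on `ℝ³`. -/
noncomputable def Dy3 (g : ℝ × ℝ × ℝ → ℝ) (z : ℝ × ℝ × ℝ) : ℝ := fderiv ℝ g z (0, 1, 0)

/-- Partial derivative in the `p`-direction of a function on `ℝ³`. -/
noncomputable def Dp3 (g : ℝ × ℝ × ℝ → ℝ) (z : ℝ × ℝ × ℝ) : ℝ := fderiv ℝ g z (0, 0, 1)

/-- Total derivative operator `𝔇 = ∂_x + p ∂_y + f ∂_p` associated with `f`. -/
noncomputable def Dtot (f g : ℝ × ℝ × ℝ → ℝ) (z : ℝ × ℝ × ℝ) : ℝ :=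
  Dx3 g z + z.2.2 * Dy3 g z + f z * Dp3 g z


/-!
Condition (i) makes `f` a cubic polynomial in `p` on every fibre, its coefficients being the
Taylor coefficients of `f` at `p = 0`, hence smooth. For `f = A p³ + 3B p² + 3C p + D` put
`E₁ = D_y - C_x - 2(BD - C²)`, `E₂ = C_y - B_x - (AD - BC)`, `E₃ = B_y - A_x - 2(AC - B²)`.
A direct computation turns the left-hand sides of (ii), (iii), (iv) into `6(E₂ + pE₃)`,
`E₁ + 2pE₂ + p²E₃` and `E₃`. So (iii) alone, a quadratic in `p` vanishing identically, forces
the system, and conversely the system makes (ii)–(iv) vanish.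
-/

open Set

def cylinder (U : Set (ℝ × ℝ)) : Set (ℝ × ℝ × ℝ) := {z | (z.1, z.2.1) ∈ U}

lemma IsOpen.cylinder {U : Set (ℝ × ℝ)} (hU : IsOpen U) : IsOpen (cylinder U) :=
  hU.preimage (by fun_prop)

def cubicP (a b c d : ℝ × ℝ → ℝ) (z : ℝ × ℝ × ℝ) : ℝ :=
  a (z.1, z.2.1) * z.2.2 ^ 3 + 3 * b (z.1, z.2.1) * z.2.2 ^ 2 + 3 * c (z.1, z.2.1) * z.2.2
    + d (z.1, z.2.1)

lemma fderiv_cubicP_apply {a b c d : ℝ × ℝ → ℝ} {z : ℝ × ℝ × ℝ}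
    (ha : DifferentiableAt ℝ a (z.1, z.2.1)) (hb : DifferentiableAt ℝ b (z.1, z.2.1))
    (hc : DifferentiableAt ℝ c (z.1, z.2.1)) (hd : DifferentiableAt ℝ d (z.1, z.2.1))
    (v : ℝ × ℝ × ℝ) :
    fderiv ℝ (cubicP a b c d) z v =
      fderiv ℝ a (z.1, z.2.1) (v.1, v.2.1) * z.2.2 ^ 3
        + 3 * fderiv ℝ b (z.1, z.2.1) (v.1, v.2.1) * z.2.2 ^ 2
        + 3 * fderiv ℝ c (z.1, z.2.1) (v.1, v.2.1) * z.2.2 + fderiv ℝ d (z.1, z.2.1) (v.1, v.2.1)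
        + 3 * (a (z.1, z.2.1) * z.2.2 ^ 2 + 2 * b (z.1, z.2.1) * z.2.2 + c (z.1, z.2.1))
          * v.2.2 := by
  have hπ : HasFDerivAt (fun w : ℝ × ℝ × ℝ => (w.1, w.2.1)) _ z :=
    hasFDerivAt_fst.prodMk (hasFDerivAt_snd (𝕜 := ℝ) (p := z)).fst
  have hp : HasFDerivAt (fun w : ℝ × ℝ × ℝ => w.2.2) _ z :=
    (hasFDerivAt_snd (𝕜 := ℝ) (p := z)).snd
  have H : HasFDerivAt (cubicP a b c d) _ z := ((((ha.hasFDerivAt.comp z hπ).mul (hp.pow 3)).add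
    (((hb.hasFDerivAt.comp z hπ).const_mul 3).mul (hp.pow 2))).add
    (((hc.hasFDerivAt.comp z hπ).const_mul 3).mul hp)).add (hd.hasFDerivAt.comp z hπ)
  rw [H.fderiv]
  simp
  ring

@[simp] lemma pdx_const_smul (c : ℝ) (g : ℝ × ℝ → ℝ) : pdx (c • g) = c • pdx g := by
  ext z; simp [pdx, fderiv_const_smul_field]

@[simp] lemma pdy_const_smul (c : ℝ) (g : ℝ × ℝ → ℝ) : pdy (c • g) = c • pdy g := by
  ext z; simp [pdy, fderiv_const_smul_field]

@[simp] lemma pdx_zero : pdx 0 = 0 := by ext z; simp [pdx]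

@[simp] lemma pdy_zero : pdy 0 = 0 := by ext z; simp [pdy]

section CubicP

variable {a b c d : ℝ × ℝ → ℝ} {z : ℝ × ℝ × ℝ}
  (ha : DifferentiableAt ℝ a (z.1, z.2.1)) (hb : DifferentiableAt ℝ b (z.1, z.2.1))
  (hc : DifferentiableAt ℝ c (z.1, z.2.1)) (hd : DifferentiableAt ℝ d (z.1, z.2.1))
include ha hb hc hd

lemma Dp3_cubicP : Dp3 (cubicP a b c d) z = cubicP 0 a ((2 : ℝ) • b) ((3 : ℝ) • c) z := by
  rw [Dp3, fderiv_cubicP_apply ha hb hc hd]; simp [cubicP, Prod.mk_zero_zero]; ring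

lemma Dx3_cubicP : Dx3 (cubicP a b c d) z = cubicP (pdx a) (pdx b) (pdx c) (pdx d) z := by
  rw [Dx3, fderiv_cubicP_apply ha hb hc hd]; simp [cubicP, pdx]

lemma Dy3_cubicP : Dy3 (cubicP a b c d) z = cubicP (pdy a) (pdy b) (pdy c) (pdy d) z := by
  rw [Dy3, fderiv_cubicP_apply ha hb hc hd]; simp [cubicP, pdy]

end CubicP

section Cylinder

variable {U : Set (ℝ × ℝ)} (hU : IsOpen U) {g : ℝ × ℝ × ℝ → ℝ} {a b c d : ℝ × ℝ → ℝ}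
  (ha : DifferentiableOn ℝ a U) (hb : DifferentiableOn ℝ b U)
  (hc : DifferentiableOn ℝ c U) (hd : DifferentiableOn ℝ d U)
  (hg : EqOn g (cubicP a b c d) (cylinder U))
include hU ha hb hc hd hg

lemma eqOn_Dp3_of_eqOn_cubicP :
    EqOn (Dp3 g) (cubicP 0 a ((2 : ℝ) • b) ((3 : ℝ) • c)) (cylinder U) := by
  intro z hz
  rw [Dp3, (hg.eventuallyEq_of_mem (hU.cylinder.mem_nhds hz)).fderiv_eq]
  have hw := hU.mem_nhds hz
  exact Dp3_cubicP (ha.differentiableAt hw) (hb.differentiableAt hw) (hc.differentiableAt hw)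
    (hd.differentiableAt hw)

lemma eqOn_Dx3_of_eqOn_cubicP :
    EqOn (Dx3 g) (cubicP (pdx a) (pdx b) (pdx c) (pdx d)) (cylinder U) := by
  intro z hz
  rw [Dx3, (hg.eventuallyEq_of_mem (hU.cylinder.mem_nhds hz)).fderiv_eq]
  have hw := hU.mem_nhds hz
  exact Dx3_cubicP (ha.differentiableAt hw) (hb.differentiableAt hw) (hc.differentiableAt hw)
    (hd.differentiableAt hw)

lemma eqOn_Dy3_of_eqOn_cubicP :
    EqOn (Dy3 g) (cubicP (pdy a) (pdy b) (pdy c) (pdy d)) (cylinder U) := by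
  intro z hz
  rw [Dy3, (hg.eventuallyEq_of_mem (hU.cylinder.mem_nhds hz)).fderiv_eq]
  have hw := hU.mem_nhds hz
  exact Dy3_cubicP (ha.differentiableAt hw) (hb.differentiableAt hw) (hc.differentiableAt hw)
    (hd.differentiableAt hw)

end Cylinder

lemma invariants_of_eqOn_cubicP {U : Set (ℝ × ℝ)} (hU : IsOpen U) {f : ℝ × ℝ × ℝ → ℝ}
    {A B C D : ℝ × ℝ → ℝ} (hA : DifferentiableOn ℝ A U) (hB : DifferentiableOn ℝ B U)
    (hC : DifferentiableOn ℝ C U) (hD : DifferentiableOn ℝ D U)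
    (hf : EqOn f (cubicP A B C D) (cylinder U)) {x y p : ℝ} (hxy : (x, y) ∈ U) :
    let z := (x, y, p)
    let E₁ := pdy D (x, y) - pdx C (x, y) - 2 * (B (x, y) * D (x, y) - C (x, y) ^ 2)
    let E₂ := pdy C (x, y) - pdx B (x, y) - (A (x, y) * D (x, y) - B (x, y) * C (x, y))
    let E₃ := pdy B (x, y) - pdx A (x, y) - 2 * (A (x, y) * C (x, y) - B (x, y) ^ 2)
    Dp3 (Dp3 (Dp3 (Dp3 f))) z = 0 ∧
    2 * Dy3 (Dp3 f) z + (1 / 3) * Dp3 f z * Dp3 (Dp3 f) z - Dtot f (Dp3 (Dp3 f)) z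
      = 6 * (E₂ + p * E₃) ∧
    Dy3 f z + (2 / 9) * (Dp3 f z) ^ 2 - (1 / 3) * Dtot f (Dp3 f) z
      = E₁ + 2 * p * E₂ + p ^ 2 * E₃ ∧
    (1 / 18) * ((Dp3 (Dp3 f) z) ^ 2 - 2 * Dp3 f z * Dp3 (Dp3 (Dp3 f)) z)
      + (1 / 6) * (Dy3 (Dp3 (Dp3 f)) z - Dtot f (Dp3 (Dp3 (Dp3 f))) z) = E₃ := by
  have hz : (x, y, p) ∈ cylinder U := hxy
  have f₁ := eqOn_Dp3_of_eqOn_cubicP hU hA hB hC hD hf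
  have f₂ := eqOn_Dp3_of_eqOn_cubicP hU (by fun_prop) hA (by fun_prop) (by fun_prop) f₁
  have f₃ := eqOn_Dp3_of_eqOn_cubicP hU (by fun_prop) (by fun_prop) (by fun_prop) (by fun_prop) f₂
  have f₄ := eqOn_Dp3_of_eqOn_cubicP hU (by fun_prop) (by fun_prop) (by fun_prop) (by fun_prop) f₃
  have x₁ := eqOn_Dx3_of_eqOn_cubicP hU (by fun_prop) hA (by fun_prop) (by fun_prop) f₁
  have x₂ := eqOn_Dx3_of_eqOn_cubicP hU (by fun_prop) (by fun_prop) (by fun_prop) (by fun_prop) f₂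
  have x₃ := eqOn_Dx3_of_eqOn_cubicP hU (by fun_prop) (by fun_prop) (by fun_prop) (by fun_prop) f₃
  have y₀ := eqOn_Dy3_of_eqOn_cubicP hU hA hB hC hD hf
  have y₁ := eqOn_Dy3_of_eqOn_cubicP hU (by fun_prop) hA (by fun_prop) (by fun_prop) f₁
  have y₂ := eqOn_Dy3_of_eqOn_cubicP hU (by fun_prop) (by fun_prop) (by fun_prop) (by fun_prop) f₂
  have y₃ := eqOn_Dy3_of_eqOn_cubicP hU (by fun_prop) (by fun_prop) (by fun_prop) (by fun_prop) f₃
  simp only [Dtot, hf hz, f₁ hz, f₂ hz, f₃ hz, f₄ hz, x₁ hz, x₂ hz, x₃ hz, y₀ hz, y₁ hz, y₂ hz,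
    y₃ hz, cubicP, pdx_const_smul, pdy_const_smul, pdx_zero, pdy_zero, Pi.smul_apply,
    Pi.zero_apply, smul_eq_mul]
  exact ⟨by ring, by ring, by ring, by ring⟩

lemma eq_of_forall_hasDerivAt {E : Type*} [NormedAddCommGroup E] [NormedSpace ℝ E]
    {g G g' : ℝ → E} (hg : ∀ t, HasDerivAt g (g' t) t)
    (hG : ∀ t, HasDerivAt G (g' t) t) (h₀ : g 0 = G 0) (t : ℝ) : g t = G t :=
  isOpen_univ.eqOn_of_deriv_eq isPreconnected_univ
    (fun s _ => (hg s).differentiableAt.differentiableWithinAt)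
    (fun s _ => (hG s).differentiableAt.differentiableWithinAt)
    (fun s _ => by rw [(hg s).deriv, (hG s).deriv]) (mem_univ 0) h₀ (mem_univ t)

lemma eq_cubic_of_hasDerivAt {g₀ g₁ g₂ g₃ : ℝ → ℝ} (h₀ : ∀ t, HasDerivAt g₀ (g₁ t) t)
    (h₁ : ∀ t, HasDerivAt g₁ (g₂ t) t) (h₂ : ∀ t, HasDerivAt g₂ (g₃ t) t)
    (h₃ : ∀ t, HasDerivAt g₃ 0 t) (t : ℝ) :
    g₀ t = g₃ 0 / 6 * t ^ 3 + g₂ 0 / 2 * t ^ 2 + g₁ 0 * t + g₀ 0 := by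
  have e₃ : ∀ t, g₃ t = g₃ 0 := eq_of_forall_hasDerivAt h₃ (fun t => hasDerivAt_const t _) rfl
  have e₂ : ∀ t, g₂ t = g₃ 0 * t + g₂ 0 := eq_of_forall_hasDerivAt h₂
    (fun t => (((hasDerivAt_id t).const_mul _).add_const _).congr_deriv (by simp [← e₃ t]))
    (by simp)
  have e₁ : ∀ t, g₁ t = g₃ 0 / 2 * t ^ 2 + g₂ 0 * t + g₁ 0 := eq_of_forall_hasDerivAt h₁
    (fun t => ((((hasDerivAt_pow 2 t).const_mul _).add ((hasDerivAt_id t).const_mul _)).add_const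
      _).congr_deriv (by rw [e₂ t]; simp; ring))
    (by simp)
  exact eq_of_forall_hasDerivAt h₀
    (fun t => (((((hasDerivAt_pow 3 t).const_mul _).add ((hasDerivAt_pow 2 t).const_mul _)).add
      ((hasDerivAt_id t).const_mul _)).add_const _).congr_deriv (by rw [e₁ t]; simp; ring))
    (by simp) t

lemma hasDerivAt_Dp3 {g : ℝ × ℝ × ℝ → ℝ} {x y t : ℝ} (hg : DifferentiableAt ℝ g (x, y, t)) :
    HasDerivAt (fun s => g (x, y, s)) (Dp3 g (x, y, t)) t :=
  hg.hasFDerivAt.comp_hasDerivAt t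
    ((hasDerivAt_const t x).prodMk ((hasDerivAt_const t y).prodMk (hasDerivAt_id t)))

lemma ContDiffOn.Dp3 {s : Set (ℝ × ℝ × ℝ)} {g : ℝ × ℝ × ℝ → ℝ} (hs : IsOpen s)
    (hg : ContDiffOn ℝ ∞ g s) : ContDiffOn ℝ ∞ (Dp3 g) s :=
  (hg.fderiv_of_isOpen hs le_rfl).clm_apply contDiffOn_const

lemma exists_eqOn_cubicP_of_Dp3_four_eq_zero {U : Set (ℝ × ℝ)} (hU : IsOpen U)
    {f : ℝ × ℝ × ℝ → ℝ} (hf : ContDiffOn ℝ ∞ f (cylinder U))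
    (hf₄ : ∀ z ∈ cylinder U, Dp3 (Dp3 (Dp3 (Dp3 f))) z = 0) :
    ∃ A B C D : ℝ × ℝ → ℝ, ContDiffOn ℝ ∞ A U ∧ ContDiffOn ℝ ∞ B U ∧
      ContDiffOn ℝ ∞ C U ∧ ContDiffOn ℝ ∞ D U ∧ EqOn f (cubicP A B C D) (cylinder U) := by
  have hS := hU.cylinder
  have hf₁ := hf.Dp3 hS
  have hf₂ := hf₁.Dp3 hS
  have hf₃ := hf₂.Dp3 hS
  have hι : ContDiffOn ℝ ∞ (fun w : ℝ × ℝ => (w.1, w.2, (0 : ℝ))) U := by fun_prop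
  have hmaps : MapsTo (fun w : ℝ × ℝ => (w.1, w.2, (0 : ℝ))) U (cylinder U) := fun w hw => hw
  refine ⟨fun w => Dp3 (Dp3 (Dp3 f)) (w.1, w.2, 0) / 6, fun w => Dp3 (Dp3 f) (w.1, w.2, 0) / 6,
    fun w => Dp3 f (w.1, w.2, 0) / 3, fun w => f (w.1, w.2, 0),
    (hf₃.comp hι hmaps).div_const 6, (hf₂.comp hι hmaps).div_const 6,
    (hf₁.comp hι hmaps).div_const 3, hf.comp hι hmaps, ?_⟩
  rintro ⟨x, y, p⟩ hxy
  have hd {g : ℝ × ℝ × ℝ → ℝ} (hg : ContDiffOn ℝ ∞ g (cylinder U)) (t : ℝ) :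
      HasDerivAt (fun s => g (x, y, s)) (Dp3 g (x, y, t)) t :=
    hasDerivAt_Dp3 ((hg.differentiableOn (by simp)).differentiableAt (hS.mem_nhds hxy))
  have := eq_cubic_of_hasDerivAt (hd hf) (hd hf₁) (hd hf₂)
    (fun t => by simpa [hf₄ (x, y, t) hxy] using hd hf₃ t) p
  rw [this, cubicP]
  ring

lemma eq_zero_of_forall_quadratic_eq_zero {a b c : ℝ}
    (h : ∀ p : ℝ, a + 2 * p * b + p ^ 2 * c = 0) : a = 0 ∧ b = 0 ∧ c = 0 := by
  have h₀ := h 0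
  have h₁ := h 1
  have h₂ := h (-1)
  refine ⟨?_, ?_, ?_⟩ <;> linarith

/-- All differential invariants of the area-preserving equivalence problem of
`y'' = f` vanish identically if and only if `f` is a cubic polynomial in `p` whose
coefficients satisfy the stated system of PDEs. -/
theorem stmt9 (U : Set (ℝ × ℝ)) (hU : IsOpen U)
    (f : ℝ × ℝ × ℝ → ℝ)
    (hf : ContDiffOn ℝ ∞ f {z : ℝ × ℝ × ℝ | (z.1, z.2.1) ∈ U}) :
    ((∀ z : ℝ × ℝ × ℝ, (z.1, z.2.1) ∈ U →
        Dp3 (Dp3 (Dp3 (Dp3 f))) z = 0) ∧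
      (∀ z : ℝ × ℝ × ℝ, (z.1, z.2.1) ∈ U →
        2 * Dy3 (Dp3 f) z + (1 / 3) * Dp3 f z * Dp3 (Dp3 f) z
          - Dtot f (Dp3 (Dp3 f)) z = 0) ∧
      (∀ z : ℝ × ℝ × ℝ, (z.1, z.2.1) ∈ U →
        Dy3 f z + (2 / 9) * (Dp3 f z) ^ 2 - (1 / 3) * Dtot f (Dp3 f) z = 0) ∧
      (∀ z : ℝ × ℝ × ℝ, (z.1, z.2.1) ∈ U →
        (1 / 18) * ((Dp3 (Dp3 f) z) ^ 2 - 2 * Dp3 f z * Dp3 (Dp3 (Dp3 f)) z)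
          + (1 / 6) * (Dy3 (Dp3 (Dp3 f)) z - Dtot f (Dp3 (Dp3 (Dp3 f))) z) = 0)) ↔
    (∃ A B C D : ℝ × ℝ → ℝ,
      ContDiffOn ℝ ∞ A U ∧ ContDiffOn ℝ ∞ B U ∧
      ContDiffOn ℝ ∞ C U ∧ ContDiffOn ℝ ∞ D U ∧
      (∀ x y p : ℝ, (x, y) ∈ U → f (x, y, p) =
        A (x, y) * p ^ 3 + 3 * B (x, y) * p ^ 2 + 3 * C (x, y) * p + D (x, y)) ∧
      (∀ z ∈ U, pdy D z - pdx C z = 2 * (B z * D z - C z ^ 2)) ∧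
      (∀ z ∈ U, pdy C z - pdx B z = A z * D z - B z * C z) ∧
      (∀ z ∈ U, pdy B z - pdx A z = 2 * (A z * C z - B z ^ 2))) := by
  have hdiff {g : ℝ × ℝ → ℝ} (hg : ContDiffOn ℝ ∞ g U) : DifferentiableOn ℝ g U :=
    hg.differentiableOn (by simp)
  constructor
  · rintro ⟨hi, -, hiii, -⟩
    obtain ⟨A, B, C, D, hA, hB, hC, hD, hcub⟩ := exists_eqOn_cubicP_of_Dp3_four_eq_zero hU hf hi
    have hinv {x y p : ℝ} (hxy : (x, y) ∈ U) := invariants_of_eqOn_cubicP hU (hdiff hA)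
      (hdiff hB) (hdiff hC) (hdiff hD) hcub (p := p) hxy
    have hE {x y : ℝ} (hxy : (x, y) ∈ U) := eq_zero_of_forall_quadratic_eq_zero fun p =>
      (hinv hxy).2.2.1 ▸ hiii (x, y, p) hxy
    refine ⟨A, B, C, D, hA, hB, hC, hD, fun x y p hxy => hcub (x := (x, y, p)) hxy, ?_, ?_, ?_⟩ <;>
      rintro ⟨x, y⟩ hxy <;> linarith [hE hxy]
  · rintro ⟨A, B, C, D, hA, hB, hC, hD, hcub, hE₁, hE₂, hE₃⟩
    have hinv {x y p : ℝ} (hxy : (x, y) ∈ U) := invariants_of_eqOn_cubicP hU (hdiff hA)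
      (hdiff hB) (hdiff hC) (hdiff hD) (fun z hz => hcub z.1 z.2.1 z.2.2 hz) (p := p) hxy
    refine ⟨?_, ?_, ?_, ?_⟩ <;> rintro ⟨x, y, p⟩ hxy
    · exact (hinv hxy).1
    · rw [(hinv hxy).2.1, hE₂ _ hxy, hE₃ _ hxy]; ring
    · rw [(hinv hxy).2.2.1, hE₁ _ hxy, hE₂ _ hxy, hE₃ _ hxy]; ring
    · rw [(hinv hxy).2.2.2, hE₃ _ hxy]; ring
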